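/- arXiv:1503.06172 — 3 statements merged into one kernel-verified Lean document; each statement's English description precedes it below -/
import Mathlib

section
/- For all n ≥ 0 and k ≥ 0, p^k_n = (1/2)·∑_{s=0}^{∞} (k+s)^n / 2^s, where p^k_n := ∑_{s=0}^{n} C(n,s) · J^0_s · k^{n−s} and the infinite series converges in ℝ. -/
/-- Stirling numbers of the second kind. -/
def stirling : ℕ → ℕ → ℕ
  | 0, 0 => 1
  | 0, _ + 1 => 0
  | _ + 1, 0 => 0
  | n + 1, s + 1 => (s + 1) * stirling n (s + 1) + stirling n s

/-- `J k n`: the number of barred preferential arrangements of an `n`-set with `k` bars,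
given by its closed form `∑ S(n,s)·s!·C(k+s,s)`. -/
def J (k n : ℕ) : ℕ :=
  ∑ s ∈ Finset.range (n + 1), stirling n s * s.factorial * (k + s).choose s

/-- `p k n`: barred preferential arrangements with `k` bars, one free section and
`k` restricted sections. -/
def p (k n : ℕ) : ℕ :=
  ∑ s ∈ Finset.range (n + 1), n.choose s * J 0 s * k ^ (n - s)

lemma stirling_eq_zero : ∀ {n t : ℕ}, n < t → stirling n t = 0 := by
  intro n
  induction n with
  | zero => intro t ht; cases t with
    | zero => omega
    | succ t => rfl
  | succ n ih =>
      intro t ht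
      cases t with
      | zero => omega
      | succ t =>
          show (t + 1) * stirling n (t + 1) + stirling n t = 0
          rw [ih (by omega), ih (by omega)]
          ring

lemma pow_eq_sum_stirling (m s : ℕ) :
    s ^ m = ∑ t ∈ Finset.range (m + 1), stirling m t * t.factorial * s.choose t := by
  induction m with
  | zero => simp [stirling]
  | succ m ih =>
      have key : ∀ t : ℕ, s * s.choose t = t * s.choose t + (t + 1) * s.choose (t + 1) := by
        intro t
        have h1 := Nat.add_one_mul_choose_eq s t
        have h2 : (s + 1).choose (t + 1) = s.choose t + s.choose (t + 1) :=
          Nat.choose_succ_succ s t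
        nlinarith [h1, h2]
      have expand : s ^ (m + 1) =
          ∑ t ∈ Finset.range (m + 1),
            (stirling m t * t.factorial * (t * s.choose t)
              + stirling m t * (t + 1).factorial * s.choose (t + 1)) := by
        rw [pow_succ, ih, Finset.sum_mul]
        refine Finset.sum_congr rfl fun t _ => ?_
        rw [Nat.factorial_succ, mul_assoc, mul_comm (s.choose t) s, key t]
        ring
      rw [expand, Finset.sum_add_distrib]
      -- first sum : shift index
      have hfirst : ∑ t ∈ Finset.range (m + 1),
          stirling m t * t.factorial * (t * s.choose t)
          = ∑ t ∈ Finset.range (m + 1),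
              stirling m (t + 1) * (t + 1).factorial * ((t + 1) * s.choose (t + 1)) := by
        rw [Finset.sum_range_succ' _ m]
        simp only [Nat.mul_zero, Nat.zero_mul, Nat.mul_one, Nat.choose_zero_right,
          Nat.factorial_zero, mul_zero, add_zero]
        rw [Finset.sum_range_succ]
        rw [stirling_eq_zero (by omega)]
        simp
      rw [hfirst]
      rw [Finset.sum_range_succ'
        (fun t => stirling (m + 1) t * t.factorial * s.choose t) (m + 1)]
      have h0 : stirling (m + 1) 0 * Nat.factorial 0 * s.choose 0 = 0 := by
        show (0 : ℕ) * _ * _ = 0; ring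
      rw [h0, add_zero, ← Finset.sum_add_distrib]
      refine Finset.sum_congr rfl fun t _ => ?_
      show stirling m (t + 1) * (t + 1).factorial * ((t + 1) * s.choose (t + 1))
          + stirling m t * (t + 1).factorial * s.choose (t + 1)
          = stirling (m + 1) (t + 1) * (t + 1).factorial * s.choose (t + 1)
      show _ = ((t + 1) * stirling m (t + 1) + stirling m t) * (t + 1).factorial * s.choose (t + 1)
      ring

lemma hasSum_choose_div (t : ℕ) :
    HasSum (fun s : ℕ => (s.choose t : ℝ) / 2 ^ s) 2 := by
  have hr : ‖(1 / 2 : ℝ)‖ < 1 := by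
    rw [Real.norm_eq_abs, abs_of_pos (by norm_num : (0:ℝ) < 1 / 2)]; norm_num
  have h := (hasSum_choose_mul_geometric_of_norm_lt_one t hr).mul_left ((1 / 2 : ℝ) ^ t)
  have heq : (fun n : ℕ => (1 / 2 : ℝ) ^ t * ((n + t).choose t * (1 / 2) ^ n))
      = fun n : ℕ => ((n + t).choose t : ℝ) / 2 ^ (n + t) := by
    funext n
    simp only [one_div, inv_pow]
    rw [pow_add, div_eq_mul_inv, mul_inv]
    ring
  rw [heq] at h
  have hval : (1 / 2 : ℝ) ^ t * (1 / (1 - 1 / 2) ^ (t + 1)) = 2 := by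
    rw [show (1 - 1 / 2 : ℝ) = 1 / 2 by norm_num]
    simp only [one_div, inv_pow, inv_inv]
    rw [pow_succ, ← mul_assoc, inv_mul_cancel₀ (by positivity : (2:ℝ) ^ t ≠ 0), one_mul]
  rw [hval] at h
  have h2 := (hasSum_nat_add_iff (f := fun s : ℕ => (s.choose t : ℝ) / 2 ^ s) t).mp h
  have hz : ∑ i ∈ Finset.range t, ((i.choose t : ℝ) / 2 ^ i) = 0 := by
    refine Finset.sum_eq_zero fun i hi => ?_
    rw [Nat.choose_eq_zero_of_lt (Finset.mem_range.mp hi)]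
    simp
  rwa [hz, add_zero] at h2

lemma hasSum_pow_div (m : ℕ) :
    HasSum (fun s : ℕ => (s : ℝ) ^ m / 2 ^ s) (2 * J 0 m) := by
  have h : HasSum (fun s : ℕ => ∑ t ∈ Finset.range (m + 1),
      (stirling m t * t.factorial : ℝ) * ((s.choose t : ℝ) / 2 ^ s))
      (∑ t ∈ Finset.range (m + 1), (stirling m t * t.factorial : ℝ) * 2) :=
    hasSum_sum fun t _ => (hasSum_choose_div t).mul_left _
  have heq : (fun s : ℕ => ∑ t ∈ Finset.range (m + 1),
      (stirling m t * t.factorial : ℝ) * ((s.choose t : ℝ) / 2 ^ s))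
      = fun s : ℕ => (s : ℝ) ^ m / 2 ^ s := by
    funext s
    have := pow_eq_sum_stirling m s
    have hcast : ((s : ℝ)) ^ m = ∑ t ∈ Finset.range (m + 1),
        (stirling m t * t.factorial : ℝ) * (s.choose t : ℝ) := by
      rw [← Nat.cast_pow, this]
      push_cast
      ring_nf
    rw [hcast, Finset.sum_div]
    exact Finset.sum_congr rfl fun t _ => by ring
  have hval : (∑ t ∈ Finset.range (m + 1), (stirling m t * t.factorial : ℝ) * 2)
      = 2 * J 0 m := by
    rw [J]
    push_cast
    rw [Finset.mul_sum]
    refine Finset.sum_congr rfl fun t _ => ?_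
    rw [Nat.zero_add, Nat.choose_self]
    push_cast
    ring
  rw [heq, hval] at h
  exact h

theorem stmt_6 (n k : ℕ) :
    Summable (fun s : ℕ => ((k : ℝ) + s) ^ n / 2 ^ s) ∧
      (p k n : ℝ) = (1 / 2) * ∑' s : ℕ, ((k : ℝ) + s) ^ n / 2 ^ s := by
  have hmain : HasSum (fun s : ℕ => ((k : ℝ) + s) ^ n / 2 ^ s) (2 * p k n) := by
    have h : HasSum (fun s : ℕ => ∑ t ∈ Finset.range (n + 1),
        ((n.choose t : ℝ) * (k : ℝ) ^ (n - t)) * ((s : ℝ) ^ t / 2 ^ s))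
        (∑ t ∈ Finset.range (n + 1),
          ((n.choose t : ℝ) * (k : ℝ) ^ (n - t)) * (2 * J 0 t)) :=
      hasSum_sum fun t _ => (hasSum_pow_div t).mul_left _
    have heq : (fun s : ℕ => ∑ t ∈ Finset.range (n + 1),
        ((n.choose t : ℝ) * (k : ℝ) ^ (n - t)) * ((s : ℝ) ^ t / 2 ^ s))
        = fun s : ℕ => ((k : ℝ) + s) ^ n / 2 ^ s := by
      funext s
      rw [add_comm (k : ℝ) (s : ℝ), add_pow]
      rw [Finset.sum_div]
      refine Finset.sum_congr rfl fun t _ => ?_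
      ring
    have hval : (∑ t ∈ Finset.range (n + 1),
        ((n.choose t : ℝ) * (k : ℝ) ^ (n - t)) * (2 * J 0 t)) = 2 * p k n := by
      rw [p]
      push_cast
      rw [Finset.mul_sum]
      refine Finset.sum_congr rfl fun t _ => ?_
      ring
    rw [heq, hval] at h
    exact h
  refine ⟨hmain.summable, ?_⟩
  rw [hmain.tsum_eq]
  ring
end

section
/- For all r ≥ 1, j ≥ 1, and n ≥ 1, p^r_j(n) = p^{r−1}_j(n) + ∑_{s=0}^{n−1} C(n,s) · p^{r−1}_j(s), where p^r_j(n) := ∑_{s=0}^{n} C(n,s) · J^{j−1}_s · r^{n−s}. -/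
/-- `P r j n`: barred preferential arrangements of an `n`-set with `r + j - 1` bars,
with `r` restricted sections and `j` free sections. -/
def P (r : ℕ) : ℕ → ℕ → ℕ
  | 0, n => r ^ n
  | j + 1, n => ∑ s ∈ Finset.range (n + 1), n.choose s * J j s * r ^ (n - s)

/-! `P (a + 1) j` is the binomial transform of `P a j`: after exchanging the two sums and
using `C(n,s)·C(s,t) = C(n,t)·C(n-t,s-t)`, the inner sum is the binomial expansion of
`(a + 1) ^ (n - t)`. The recursion is the transform with its `s = n` term split off. -/

open Finset

theorem sum_choose_mul_sum_choose_mul_pow {R : Type*} [CommSemiring R] (f : ℕ → R) (a : R)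
    (n : ℕ) :
    ∑ s ∈ range (n + 1), (n.choose s : R) * ∑ t ∈ range (s + 1), s.choose t * f t * a ^ (s - t) =
      ∑ t ∈ range (n + 1), n.choose t * f t * (a + 1) ^ (n - t) := by
  simp only [mul_sum, range_eq_Ico]
  rw [← sum_Ico_Ico_comm]
  refine sum_congr rfl fun t ht => ?_
  have htn : t ≤ n := Nat.lt_succ_iff.mp (mem_Ico.mp ht).2
  rw [sum_Ico_eq_sum_range, Nat.succ_sub htn, add_pow, mul_sum]
  refine sum_congr rfl fun i _ => ?_
  have hchoose := Nat.choose_mul (n := n) (Nat.le_add_right t i)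
  rw [Nat.add_sub_cancel_left] at hchoose ⊢
  rw [← mul_assoc, ← mul_assoc, ← Nat.cast_mul, hchoose]
  push_cast
  ring

theorem P_add_one (a j n : ℕ) :
    P (a + 1) j n = ∑ s ∈ range (n + 1), n.choose s * P a j s := by
  cases j with
  | zero => simp [P, add_pow, mul_comm]
  | succ k => exact (sum_choose_mul_sum_choose_mul_pow (J k) a n).symm

theorem stmt_12_general (r j n : ℕ) (hr : 1 ≤ r) :
    P r j n = P (r - 1) j n + ∑ s ∈ Finset.range n, n.choose s * P (r - 1) j s := by
  obtain ⟨a, rfl⟩ := Nat.exists_eq_add_of_le' hr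
  rw [Nat.add_sub_cancel, P_add_one, sum_range_succ, Nat.choose_self, one_mul, add_comm]

theorem stmt_12 (r j n : ℕ) (hr : 1 ≤ r) (hj : 1 ≤ j) (hn : 1 ≤ n) :
    P r j n = P (r - 1) j n + ∑ s ∈ Finset.range n, n.choose s * P (r - 1) j s :=
  stmt_12_general r j n hr
end

section
/- For all n ≥ 0, r ≥ 0, and j ≥ 1, p^{r+1}_j(n) = 2·p^r_j(n) − p^r_{j−1}(n), where p^r_j(n) := ∑_{s=0}^{n} C(n,s) · J^{j−1}_s · r^{n−s} for j ≥ 1 and p^r_0(n) := r^n. -/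
open Finset Polynomial
open scoped Nat

theorem stirling_eq_stirlingSecond : stirling = Nat.stirlingSecond := by
  funext n s
  induction n generalizing s with
  | zero => cases s <;> rfl
  | succ n ih => cases s <;> simp [stirling, Nat.stirlingSecond, ih]

theorem Nat.sum_range_choose_mul_stirlingSecond (n s : ℕ) :
    ∑ m ∈ range (n + 1), n.choose m * stirlingSecond m s = stirlingSecond (n + 1) (s + 1) := by
  induction n generalizing s with
  | zero => simp [stirlingSecond_succ_succ]
  | succ n ih =>
    have := sum_choose_succ_mul (fun m _ => stirlingSecond m s) n
    simp only [Nat.cast_id] at this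
    rw [this, ih]
    cases s with
    | zero => simp [stirlingSecond_succ_succ]
    | succ s =>
      simp only [stirlingSecond_succ_succ, mul_add, sum_add_distrib, mul_left_comm _ (s + 1),
        ← mul_sum, ih]
      ring

section BinomialSum

variable {R : Type*} [CommSemiring R]

def binomialSum (r : R) (a : ℕ → R) (n : ℕ) : R :=
  ∑ s ∈ range (n + 1), n.choose s * a s * r ^ (n - s)

def umbral (a : ℕ → R) : R[X] →ₗ[R] R :=
  lsum fun s => LinearMap.mulRight R (a s)

theorem umbral_monomial (a : ℕ → R) (s : ℕ) (c : R) : umbral a (monomial s c) = c * a s := by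
  simp [umbral, lsum_apply, sum_monomial_index]

theorem binomialSum_eq_umbral (r : R) (a : ℕ → R) (n : ℕ) :
    binomialSum r a n = umbral a ((X + C r) ^ n) := by
  rw [add_pow, map_sum, binomialSum]
  refine sum_congr rfl fun s _ => ?_
  rw [← C_pow, ← C_eq_natCast, mul_assoc (X ^ s), ← C_mul, mul_comm (X ^ s),
    C_mul_X_pow_eq_monomial, umbral_monomial]
  ring

theorem binomialSum_add (r q : R) (a : ℕ → R) (n : ℕ) :
    binomialSum (r + q) a n = binomialSum r (binomialSum q a) n := by
  rw [binomialSum_eq_umbral, C_add, add_comm (C r), ← add_assoc, add_pow, map_sum, binomialSum]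
  refine sum_congr rfl fun m _ => ?_
  rw [← C_pow, ← C_eq_natCast, mul_assoc, ← C_mul, mul_comm, C_mul', map_smul, smul_eq_mul,
    ← binomialSum_eq_umbral]
  ring

theorem binomialSum_pow (x r : R) (n : ℕ) : binomialSum r (x ^ ·) n = (x + r) ^ n := by
  rw [add_pow, binomialSum]
  exact sum_congr rfl fun s _ => by ring

end BinomialSum

def stirlingTransform (c : ℕ → ℕ) (n : ℕ) : ℕ :=
  ∑ t ∈ range (n + 1), Nat.stirlingSecond n t * t ! * c t

theorem stirlingTransform_eq_sum_range {n N : ℕ} (c : ℕ → ℕ) (h : n ≤ N) :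
    stirlingTransform c n = ∑ t ∈ range (N + 1), Nat.stirlingSecond n t * t ! * c t := by
  refine sum_subset (range_subset_range.2 (by omega)) fun t _ ht => ?_
  rw [Nat.stirlingSecond_eq_zero_of_lt (by simp only [mem_range, not_lt] at ht; omega), zero_mul,
    zero_mul]

theorem stirlingTransform_zero_pow : stirlingTransform (0 ^ ·) = (0 ^ ·) := by
  funext n
  rw [stirlingTransform, sum_range_succ']
  cases n <;> simp

theorem binomialSum_one_stirlingTransform (c : ℕ → ℕ) (n : ℕ) :
    binomialSum 1 (stirlingTransform c) n =
      ∑ t ∈ range (n + 1), Nat.stirlingSecond (n + 1) (t + 1) * t ! * c t := by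
  calc binomialSum 1 (stirlingTransform c) n
      = ∑ m ∈ range (n + 1), ∑ t ∈ range (n + 1),
          n.choose m * Nat.stirlingSecond m t * (t ! * c t) := by
        refine sum_congr rfl fun m hm => ?_
        rw [stirlingTransform_eq_sum_range c (mem_range_succ_iff.mp hm), Nat.cast_id, one_pow,
          mul_one, mul_sum]
        exact sum_congr rfl fun t _ => by ring
    _ = _ := by
        rw [sum_comm]
        refine sum_congr rfl fun t _ => ?_
        rw [← sum_mul, Nat.sum_range_choose_mul_stirlingSecond, mul_assoc]

section Pascal

variable {c c' : ℕ → ℕ}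

theorem stirlingTransform_eq_add (hc0 : c 0 = c' 0) (hc : ∀ t, c (t + 1) = c' (t + 1) + c t)
    (n : ℕ) : stirlingTransform c n = stirlingTransform c' n +
      ∑ t ∈ range (n + 1), Nat.stirlingSecond n (t + 1) * (t + 1)! * c t := by
  rw [stirlingTransform, stirlingTransform, sum_range_succ', sum_range_succ' _ n, sum_range_succ,
    Nat.stirlingSecond_eq_zero_of_lt n.lt_succ_self]
  simp only [hc, hc0, mul_add, sum_add_distrib]
  ring

theorem binomialSum_one_stirlingTransform_add (hc0 : c 0 = c' 0)
    (hc : ∀ t, c (t + 1) = c' (t + 1) + c t) (n : ℕ) :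
    binomialSum 1 (stirlingTransform c) n + stirlingTransform c' n = 2 * stirlingTransform c n := by
  have hsucc : ∑ t ∈ range (n + 1), Nat.stirlingSecond (n + 1) (t + 1) * t ! * c t =
      ∑ t ∈ range (n + 1), Nat.stirlingSecond n (t + 1) * (t + 1)! * c t +
        stirlingTransform c n := by
    simp only [stirlingTransform, Nat.stirlingSecond_succ_succ, Nat.factorial_succ,
      ← sum_add_distrib]
    exact sum_congr rfl fun t _ => by ring
  rw [binomialSum_one_stirlingTransform, hsucc, stirlingTransform_eq_add hc0 hc n]
  ring

theorem binomialSum_add_one_stirlingTransform_add (hc0 : c 0 = c' 0)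
    (hc : ∀ t, c (t + 1) = c' (t + 1) + c t) (r n : ℕ) :
    binomialSum (r + 1) (stirlingTransform c) n + binomialSum r (stirlingTransform c') n =
      2 * binomialSum r (stirlingTransform c) n := by
  rw [binomialSum_add, binomialSum, binomialSum, binomialSum, ← sum_add_distrib, mul_sum]
  refine sum_congr rfl fun m _ => ?_
  rw [Nat.cast_id]
  calc _ = n.choose m * (binomialSum 1 (stirlingTransform c) m + stirlingTransform c' m) *
        r ^ (n - m) := by ring
    _ = _ := by rw [binomialSum_one_stirlingTransform_add hc0 hc]; ring

end Pascal

theorem P_zero_eq (r n : ℕ) : P r 0 n = binomialSum r (stirlingTransform (0 ^ ·)) n := by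
  simp only [stirlingTransform_zero_pow, binomialSum_pow, zero_add, P]

theorem P_succ_eq (r k n : ℕ) :
    P r (k + 1) n = binomialSum r (stirlingTransform fun t => (k + t).choose t) n := by
  simp [P, J, binomialSum, stirlingTransform, stirling_eq_stirlingSecond]

theorem P_add_one_succ_add (r k n : ℕ) :
    P (r + 1) (k + 1) n + P r k n = 2 * P r (k + 1) n := by
  rw [P_succ_eq, P_succ_eq]
  cases k with
  | zero =>
    rw [P_zero_eq]
    exact binomialSum_add_one_stirlingTransform_add (by simp) (by simp) r n
  | succ k =>
    rw [P_succ_eq]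
    refine binomialSum_add_one_stirlingTransform_add (by simp) (fun t => ?_) r n
    rw [show k + 1 + (t + 1) = k + 1 + t + 1 by omega, Nat.choose_succ_succ',
      show k + (t + 1) = k + 1 + t by omega, add_comm]

theorem stmt_13 (n r j : ℕ) (hj : 1 ≤ j) :
    (P (r + 1) j n : ℤ) = 2 * P r j n - P r (j - 1) n := by
  obtain ⟨k, rfl⟩ := Nat.exists_eq_add_of_le' hj
  have h := P_add_one_succ_add r k n
  rw [Nat.add_sub_cancel]
  omega
end
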